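/- Let d ≥ 1, k ≥ 1, and let t₁, …, t_{2k+2} ∈ ℤ^d be an O_k-configuration. The configuration is ℓ1-isometric to O_k if and only if there exist a unique point t ∈ ℤ^d and a unique subset Ω ⊆ {1, …, d} of size k+1 such that {t₁, …, t_{2k+2}} = {t + e_ω : ω ∈ Ω} ∪ {t − e_ω : ω ∈ Ω}, where e₁, …, e_d are the standard basis vectors of ℤ^d. -/

import Mathlib

/-!
Two antipodal points `x, x'` of the configuration are at `ℓ∞` distance `≠ 1` and `ℓ1` distance `2`,
so `x - x' = ±2 e_ω`. For two antipodal pairs `(a, a')`, `(b, b')` all four cross distances are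
`1` in `ℓ∞`; looking at the coordinates `ω` and `ν` of the two pairs forces `a - b = ε e_ω - δ e_ν`
with `ω ≠ ν`, hence `a + a' = b + b'`. So all antipodal pairs share a midpoint `t`, and each point
is `t ± e_ω`. Conversely, distinct points `t ± e_ω` are at `ℓ1` distance `2`. The pair `(t, Ω)` is
recovered from the set: `t + e_ω` and `t - e_ω` both lying in it pin down the center, and then
`Ω` is read off.
-/

/-- The `ℓ∞` distance between two points of `ℤ^d`, as a natural number. -/
def linfDist {d : ℕ} (x y : Fin d → ℤ) : ℕ :=
  Finset.univ.sup fun i => (x i - y i).natAbs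

/-- The `ℓ1` distance between two points of `ℤ^d`, as a natural number. -/
def l1Dist {d : ℕ} (x y : Fin d → ℤ) : ℕ :=
  ∑ i, (x i - y i).natAbs

/-- A family of `2k+2` distinct points of `ℤ^d` is an `O_k`-configuration if, in the graph on the
indices with an edge exactly when the `ℓ∞` distance is `1`, every index is adjacent to all others
except exactly one. -/
def IsOkConfig (d k : ℕ) (t : Fin (2 * k + 2) → Fin d → ℤ) : Prop :=
  Function.Injective t ∧
    ∀ i : Fin (2 * k + 2), ∃! i' : Fin (2 * k + 2), i' ≠ i ∧ linfDist (t i) (t i') ≠ 1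

open Finset

section

variable {d : ℕ}

lemma linfDist_comm (x y : Fin d → ℤ) : linfDist x y = linfDist y x := by
  unfold linfDist
  congr 1
  funext i
  omega

lemma natAbs_sub_le_linfDist (x y : Fin d → ℤ) (i : Fin d) :
    (x i - y i).natAbs ≤ linfDist x y :=
  le_sup (f := fun i => (x i - y i).natAbs) (mem_univ i)

lemma linfDist_le_l1Dist (x y : Fin d → ℤ) : linfDist x y ≤ l1Dist x y :=
  Finset.sup_le fun i _ => single_le_sum (f := fun i => (x i - y i).natAbs)
    (fun _ _ => Nat.zero_le _) (mem_univ i)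

lemma eq_zero_of_sum_natAbs_le {ι : Type*} [Fintype ι] [DecidableEq ι] {u : ι → ℤ}
    {s : Finset ι} (h : ∑ j, (u j).natAbs ≤ ∑ j ∈ s, (u j).natAbs) {j : ι} (hj : j ∉ s) :
    u j = 0 := by
  have hsplit := sum_add_sum_compl s fun j => (u j).natAbs
  have hj' : (u j).natAbs ≤ ∑ j ∈ sᶜ, (u j).natAbs :=
    single_le_sum (f := fun j => (u j).natAbs) (fun _ _ => Nat.zero_le _) (mem_compl.2 hj)
  omega

lemma exists_sub_eq_single_of_l1Dist_eq_two {x y : Fin d → ℤ} (h2 : l1Dist x y = 2)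
    (h1 : linfDist x y ≠ 1) :
    ∃ ω : Fin d, ∃ ε : ℤ, (ε = 1 ∨ ε = -1) ∧ x - y = Pi.single ω (2 * ε) := by
  have hne : linfDist x y ≠ 0 := by
    intro h0
    have hzero : ∀ i, (x i - y i).natAbs = 0 := fun i => by
      have := natAbs_sub_le_linfDist x y i
      omega
    simp [l1Dist, hzero] at h2
  have hnonempty : (univ : Finset (Fin d)).Nonempty :=
    nonempty_iff_ne_empty.2 fun hempty => hne (by simp [linfDist, hempty])
  obtain ⟨ω, -, hω⟩ := exists_mem_eq_sup univ hnonempty fun i => (x i - y i).natAbs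
  have hω2 : (x ω - y ω).natAbs = 2 := by
    have hω' : linfDist x y = (x ω - y ω).natAbs := hω
    have := linfDist_le_l1Dist x y
    omega
  have hoff : ∀ j ≠ ω, x j - y j = 0 := fun j hj =>
    eq_zero_of_sum_natAbs_le (u := x - y) (s := {ω})
      (by rw [sum_singleton]; exact h2.le.trans hω2.ge) (by simpa using hj)
  refine ⟨ω, (x ω - y ω) / 2, by omega, funext fun j => ?_⟩
  by_cases hj : j = ω
  · subst hj
    simp only [Pi.sub_apply, Pi.single_eq_same]
    omega
  · simp [hj, hoff j hj]

lemma add_eq_add_of_linfDist_le_one {a a' b b' : Fin d → ℤ} {ω ν : Fin d} {ε δ : ℤ}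
    (hε : ε = 1 ∨ ε = -1) (hδ : δ = 1 ∨ δ = -1)
    (ha : a - a' = Pi.single ω (2 * ε)) (hb : b - b' = Pi.single ν (2 * δ))
    (hab : l1Dist a b = 2) (hab₁ : linfDist a b ≤ 1) (ha'b : linfDist a' b ≤ 1)
    (hab' : linfDist a b' ≤ 1) (ha'b' : linfDist a' b' ≤ 1) :
    a + a' = b + b' := by
  have ha' : ∀ j, a' j = a j - (Pi.single ω (2 * ε) : Fin d → ℤ) j := fun j => by
    rw [← ha]; simp
  have hb' : ∀ j, b' j = b j - (Pi.single ν (2 * δ) : Fin d → ℤ) j := fun j => by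
    rw [← hb]; simp
  have coord : ∀ {x y : Fin d → ℤ}, linfDist x y ≤ 1 → ∀ j, (x j - y j).natAbs ≤ 1 :=
    fun h j => (natAbs_sub_le_linfDist _ _ j).trans h
  have hω : a ω - b ω = ε := by
    have h₁ := coord hab₁ ω
    have h₂ := coord ha'b ω
    rw [ha', Pi.single_eq_same] at h₂
    omega
  have hν : a ν - b ν = -δ := by
    have h₁ := coord hab₁ ν
    have h₂ := coord hab' ν
    rw [hb', Pi.single_eq_same] at h₂
    omega
  have hων : ω ≠ ν := by
    rintro rfl
    have h := coord ha'b' ω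
    rw [ha', hb', Pi.single_eq_same, Pi.single_eq_same] at h
    omega
  have hoff : ∀ j, j ≠ ω → j ≠ ν → a j = b j := fun j hjω hjν => by
    have hsum : l1Dist a b ≤ ∑ j ∈ {ω, ν}, (a j - b j).natAbs := by
      rw [sum_pair hων, hω, hν, hab]
      omega
    have := eq_zero_of_sum_natAbs_le (u := a - b) hsum (j := j) (by simp [hjω, hjν])
    simpa [sub_eq_zero] using this
  funext j
  simp only [Pi.add_apply, ha', hb', Pi.single_apply]
  by_cases hjω : j = ω
  · subst hjω
    simp only [if_pos, if_neg hων]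
    omega
  · by_cases hjν : j = ν
    · subst hjν
      simp only [if_pos, if_neg hjω]
      omega
    · simp only [if_neg hjω, if_neg hjν, hoff j hjω hjν]

lemma l1Dist_add_single_add_single (t : Fin d → ℤ) {ω ν : Fin d} {ε η : ℤ}
    (hε : ε = 1 ∨ ε = -1) (hη : η = 1 ∨ η = -1) (hne : t + Pi.single ω ε ≠ t + Pi.single ν η) :
    l1Dist (t + Pi.single ω ε) (t + Pi.single ν η) = 2 := by
  simp only [l1Dist, Pi.add_apply, add_sub_add_left_eq_sub]
  by_cases hων : ω = ν
  · subst hων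
    have hεη : ε ≠ η := fun h => hne (h ▸ rfl)
    have hterm : ∀ j, ((Pi.single ω ε : Fin d → ℤ) j - (Pi.single ω η : Fin d → ℤ) j).natAbs =
        (Pi.single ω (ε - η).natAbs : Fin d → ℕ) j := fun j => by
      rcases eq_or_ne j ω with rfl | hj <;> simp [*]
    simp only [hterm, sum_pi_single', mem_univ, if_true]
    omega
  · have hterm : ∀ j, ((Pi.single ω ε : Fin d → ℤ) j - (Pi.single ν η : Fin d → ℤ) j).natAbs =
        (Pi.single ω 1 : Fin d → ℕ) j + (Pi.single ν 1 : Fin d → ℕ) j := fun j => by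
      rcases eq_or_ne j ω with rfl | hjω
      · simp [hων]
        omega
      · rcases eq_or_ne j ν with rfl | hjν
        · simp [hjω]
          omega
        · simp [hjω, hjν]
    simp [hterm, sum_add_distrib]

lemma eq_of_single_eq_single {ι M : Type*} [DecidableEq ι] [Zero M] {ω ν : ι} {x y : M}
    (hx : x ≠ 0) (h : (Pi.single ω x : ι → M) = Pi.single ν y) : ω = ν := by
  by_contra hων
  have h' := congrFun h ω
  rw [Pi.single_eq_same, Pi.single_eq_of_ne hων] at h'
  exact hx h'

def crossPolytopeVertices (t : Fin d → ℤ) (Ω : Finset (Fin d)) : Set (Fin d → ℤ) :=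
  ((fun w : Fin d => t + Pi.single w 1) '' ↑Ω) ∪ ((fun w : Fin d => t - Pi.single w 1) '' ↑Ω)

lemma mem_crossPolytopeVertices {t x : Fin d → ℤ} {Ω : Finset (Fin d)} :
    x ∈ crossPolytopeVertices t Ω ↔
      ∃ ω ∈ Ω, ∃ ε : ℤ, (ε = 1 ∨ ε = -1) ∧ x = t + Pi.single ω ε := by
  simp only [crossPolytopeVertices, Set.mem_union, Set.mem_image, mem_coe]
  constructor
  · rintro (⟨ω, hω, rfl⟩ | ⟨ω, hω, rfl⟩)
    · exact ⟨ω, hω, 1, Or.inl rfl, rfl⟩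
    · exact ⟨ω, hω, -1, Or.inr rfl, by rw [Pi.single_neg, sub_eq_add_neg]⟩
  · rintro ⟨ω, hω, ε, rfl | rfl, rfl⟩
    · exact Or.inl ⟨ω, hω, rfl⟩
    · exact Or.inr ⟨ω, hω, by rw [Pi.single_neg, sub_eq_add_neg]⟩

lemma add_single_one_mem_crossPolytopeVertices_iff {t : Fin d → ℤ} {Ω : Finset (Fin d)}
    {ω : Fin d} : t + Pi.single ω 1 ∈ crossPolytopeVertices t Ω ↔ ω ∈ Ω := by
  refine ⟨fun h => ?_, fun hω => Or.inl ⟨ω, hω, rfl⟩⟩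
  obtain ⟨ν, hν, _, -, hsingle⟩ := mem_crossPolytopeVertices.1 h
  exact eq_of_single_eq_single one_ne_zero (add_left_cancel hsingle) ▸ hν

lemma ncard_crossPolytopeVertices (t : Fin d → ℤ) (Ω : Finset (Fin d)) :
    (crossPolytopeVertices t Ω).ncard = 2 * Ω.card := by
  have hinj : ∀ ε : ℤ, ε ≠ 0 → Function.Injective fun ω : Fin d => t + Pi.single ω ε :=
    fun ε hε ω ν h => eq_of_single_eq_single hε (add_left_cancel h)
  have hdisj : Disjoint ((fun ω : Fin d => t + Pi.single ω 1) '' ↑Ω)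
      ((fun ω : Fin d => t - Pi.single ω 1) '' ↑Ω) := by
    refine Set.disjoint_left.2 ?_
    rintro - ⟨ω, -, rfl⟩ ⟨ν, -, h⟩
    have h' := congrFun h ω
    simp only [Pi.add_apply, Pi.sub_apply, Pi.single_eq_same, Pi.single_apply] at h'
    split_ifs at h' <;> omega
  unfold crossPolytopeVertices
  simp only [sub_eq_add_neg, ← Pi.single_neg] at hdisj ⊢
  rw [Set.ncard_union_eq hdisj, Set.ncard_image_of_injective _ (hinj 1 one_ne_zero),
    Set.ncard_image_of_injective _ (hinj (-1) (by norm_num)), Set.ncard_coe_finset]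
  ring

lemma crossPolytopeVertices_inj {t t' : Fin d → ℤ} {Ω Ω' : Finset (Fin d)} (hΩ : Ω.Nonempty)
    (h : crossPolytopeVertices t Ω = crossPolytopeVertices t' Ω') : t = t' ∧ Ω = Ω' := by
  obtain ⟨ω, hω⟩ := hΩ
  have hplus : t + Pi.single ω 1 ∈ crossPolytopeVertices t' Ω' := h ▸ Or.inl ⟨ω, hω, rfl⟩
  have hminus : t - Pi.single ω 1 ∈ crossPolytopeVertices t' Ω' := h ▸ Or.inr ⟨ω, hω, rfl⟩
  obtain ⟨ν, -, ε, hε, hν⟩ := mem_crossPolytopeVertices.1 hplus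
  obtain ⟨μ, -, η, hη, hμ⟩ := mem_crossPolytopeVertices.1 hminus
  have hcenter : t = t' := by
    have h₁ := congrFun hν ω
    have h₂ := congrFun hμ ω
    simp only [Pi.add_apply, Pi.sub_apply, Pi.single_eq_same, Pi.single_apply] at h₁ h₂
    have hνε : ν = ω ∧ ε = 1 := by
      split_ifs at h₁ h₂ with hων <;> first | exact ⟨hων.symm, by omega⟩ | omega
    obtain ⟨rfl, rfl⟩ := hνε
    exact add_right_cancel hν
  subst hcenter
  refine ⟨rfl, Finset.ext fun ν => ?_⟩
  rw [← add_single_one_mem_crossPolytopeVertices_iff, h,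
    add_single_one_mem_crossPolytopeVertices_iff]

lemma l1Dist_eq_two_of_mem_crossPolytopeVertices {t x y : Fin d → ℤ} {Ω : Finset (Fin d)}
    (hx : x ∈ crossPolytopeVertices t Ω) (hy : y ∈ crossPolytopeVertices t Ω) (hxy : x ≠ y) :
    l1Dist x y = 2 := by
  obtain ⟨ω, -, ε, hε, rfl⟩ := mem_crossPolytopeVertices.1 hx
  obtain ⟨ν, -, η, hη, rfl⟩ := mem_crossPolytopeVertices.1 hy
  exact l1Dist_add_single_add_single t hε hη hxy

end

namespace IsOkConfig

variable {d k : ℕ} {ts : Fin (2 * k + 2) → Fin d → ℤ}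

noncomputable def antipode (ht : IsOkConfig d k ts) (i : Fin (2 * k + 2)) : Fin (2 * k + 2) :=
  (ht.2 i).exists.choose

lemma antipode_ne (ht : IsOkConfig d k ts) (i : Fin (2 * k + 2)) : ht.antipode i ≠ i :=
  (ht.2 i).exists.choose_spec.1

lemma linfDist_antipode_ne_one (ht : IsOkConfig d k ts) (i : Fin (2 * k + 2)) :
    linfDist (ts i) (ts (ht.antipode i)) ≠ 1 :=
  (ht.2 i).exists.choose_spec.2

lemma eq_antipode_of_linfDist_ne_one (ht : IsOkConfig d k ts) {i j : Fin (2 * k + 2)}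
    (hji : j ≠ i) (h : linfDist (ts i) (ts j) ≠ 1) : j = ht.antipode i :=
  (ht.2 i).unique ⟨hji, h⟩ (ht.2 i).exists.choose_spec

lemma linfDist_eq_one (ht : IsOkConfig d k ts) {i j : Fin (2 * k + 2)} (hji : j ≠ i)
    (hj : j ≠ ht.antipode i) : linfDist (ts i) (ts j) = 1 :=
  not_not.1 fun h => hj (ht.eq_antipode_of_linfDist_ne_one hji h)

lemma antipode_antipode (ht : IsOkConfig d k ts) (i : Fin (2 * k + 2)) :
    ht.antipode (ht.antipode i) = i :=
  (ht.eq_antipode_of_linfDist_ne_one (ht.antipode_ne i).symm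
    (by rw [linfDist_comm]; exact ht.linfDist_antipode_ne_one i)).symm

lemma antipode_injective (ht : IsOkConfig d k ts) : Function.Injective ht.antipode :=
  Function.LeftInverse.injective ht.antipode_antipode

lemma exists_sub_antipode_eq_single (ht : IsOkConfig d k ts)
    (hl1 : ∀ i j, i ≠ j → l1Dist (ts i) (ts j) = 2) (i : Fin (2 * k + 2)) :
    ∃ ω : Fin d, ∃ ε : ℤ, (ε = 1 ∨ ε = -1) ∧ ts i - ts (ht.antipode i) = Pi.single ω (2 * ε) :=
  exists_sub_eq_single_of_l1Dist_eq_two (hl1 _ _ (ht.antipode_ne i).symm)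
    (ht.linfDist_antipode_ne_one i)

lemma add_antipode_eq_add_antipode (ht : IsOkConfig d k ts)
    (hl1 : ∀ i j, i ≠ j → l1Dist (ts i) (ts j) = 2) (i j : Fin (2 * k + 2)) :
    ts i + ts (ht.antipode i) = ts j + ts (ht.antipode j) := by
  by_cases hji : j = i
  · rw [hji]
  by_cases hja : j = ht.antipode i
  · rw [hja, ht.antipode_antipode, add_comm]
  have haj : ht.antipode j ≠ i := fun h => hja (by rw [← h, ht.antipode_antipode])
  have haa : ht.antipode j ≠ ht.antipode i := fun h => hji (ht.antipode_injective h)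
  obtain ⟨ω, ε, hε, ha⟩ := ht.exists_sub_antipode_eq_single hl1 i
  obtain ⟨ν, δ, hδ, hb⟩ := ht.exists_sub_antipode_eq_single hl1 j
  exact add_eq_add_of_linfDist_le_one hε hδ ha hb (hl1 i j (Ne.symm hji))
    (ht.linfDist_eq_one hji hja).le
    (ht.linfDist_eq_one (i := ht.antipode i) hja (by rwa [ht.antipode_antipode])).le
    (ht.linfDist_eq_one haj haa).le
    (ht.linfDist_eq_one (i := ht.antipode i) haa (by rwa [ht.antipode_antipode])).le

lemma exists_range_eq_crossPolytopeVertices (ht : IsOkConfig d k ts)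
    (hl1 : ∀ i j, i ≠ j → l1Dist (ts i) (ts j) = 2) :
    ∃ t Ω, Set.range ts = crossPolytopeVertices t Ω := by
  choose ω ε hε hsub using ht.exists_sub_antipode_eq_single hl1
  set i₀ : Fin (2 * k + 2) := ⟨0, by omega⟩
  set t := ts i₀ - Pi.single (ω i₀) (ε i₀)
  have hpoint : ∀ i, ts i = t + Pi.single (ω i) (ε i) ∧
      ts (ht.antipode i) = t + Pi.single (ω i) (-ε i) := by
    intro i
    have hsum := ht.add_antipode_eq_add_antipode hl1 i i₀
    constructor <;> funext j
    all_goals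
      have h₁ := congrFun hsum j
      have h₂ := congrFun (hsub i) j
      have h₃ := congrFun (hsub i₀) j
      simp only [Pi.add_apply, Pi.sub_apply, Pi.single_apply, t] at h₁ h₂ h₃ ⊢
      split_ifs at h₁ h₂ h₃ ⊢ <;> omega
  refine ⟨t, univ.image ω, Set.ext fun x => ?_⟩
  rw [mem_crossPolytopeVertices]
  constructor
  · rintro ⟨i, rfl⟩
    exact ⟨ω i, mem_image_of_mem _ (mem_univ i), ε i, hε i, (hpoint i).1⟩
  · rintro ⟨_, hw, η, hη, rfl⟩
    obtain ⟨i, -, rfl⟩ := mem_image.1 hw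
    obtain rfl | rfl : η = ε i ∨ η = -ε i := by have := hε i; omega
    · exact ⟨i, (hpoint i).1⟩
    · exact ⟨ht.antipode i, (hpoint i).2⟩

end IsOkConfig

theorem okConfig_l1_isometric_iff_center_general (d k : ℕ)
    (ts : Fin (2 * k + 2) → Fin d → ℤ) (ht : IsOkConfig d k ts) :
    (∀ i j : Fin (2 * k + 2), i ≠ j → l1Dist (ts i) (ts j) = 2) ↔
      ∃! p : (Fin d → ℤ) × Finset (Fin d), p.2.card = k + 1 ∧
        Set.range ts =
          ((fun w : Fin d => p.1 + Pi.single w 1) '' ↑p.2) ∪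
            ((fun w : Fin d => p.1 - Pi.single w 1) '' ↑p.2) := by
  constructor
  · intro hl1
    obtain ⟨t, Ω, hrange⟩ := ht.exists_range_eq_crossPolytopeVertices hl1
    have hcard : Ω.card = k + 1 := by
      have h := congrArg Set.ncard hrange
      rw [Set.ncard_range_of_injective ht.1, Nat.card_fin, ncard_crossPolytopeVertices] at h
      omega
    refine ⟨(t, Ω), ⟨hcard, hrange⟩, ?_⟩
    rintro ⟨t', Ω'⟩ ⟨-, hrange'⟩
    obtain ⟨rfl, rfl⟩ :=
      crossPolytopeVertices_inj (card_pos.1 (by omega)) (hrange.symm.trans hrange')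
    rfl
  · rintro ⟨⟨t, Ω⟩, ⟨-, hrange⟩, -⟩ i j hij
    have hmem : ∀ i, ts i ∈ crossPolytopeVertices t Ω := fun i => by
      rw [crossPolytopeVertices, ← hrange]
      exact Set.mem_range_self i
    exact l1Dist_eq_two_of_mem_crossPolytopeVertices (hmem i) (hmem j) (ht.1.ne hij)

/-- An `O_k`-configuration is `ℓ1`-isometric to `O_k` (all pairwise `ℓ1`
distances equal `2`) if and only if there is a unique pair `(t, Ω)` of a point `t ∈ ℤ^d` and a
`(k+1)`-element subset `Ω ⊆ {1,…,d}` with the configuration being exactly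
`{t + e_ω : ω ∈ Ω} ∪ {t − e_ω : ω ∈ Ω}`. -/
theorem okConfig_l1_isometric_iff_center (d k : ℕ) (hd : 1 ≤ d) (hk : 1 ≤ k)
    (ts : Fin (2 * k + 2) → Fin d → ℤ) (ht : IsOkConfig d k ts) :
    (∀ i j : Fin (2 * k + 2), i ≠ j → l1Dist (ts i) (ts j) = 2) ↔
      ∃! p : (Fin d → ℤ) × Finset (Fin d), p.2.card = k + 1 ∧
        Set.range ts =
          ((fun w : Fin d => p.1 + Pi.single w 1) '' ↑p.2) ∪
            ((fun w : Fin d => p.1 - Pi.single w 1) '' ↑p.2) :=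
  okConfig_l1_isometric_iff_center_general d k ts ht
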